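/- Let k ≥ 2 and a > 0, and let F(x) = x^k/a^k − 1. Then F(0) = −1, F'(0) = 0, F(a·2^{1/k}) = 1, F'(a·2^{1/k}) ≠ 0, and |F(y)| < 1 for all y ∈ (0, a·2^{1/k}). Moreover there exists a global solution (x,θ): ℝ → ℝ² of x' = cos θ, θ' = F'(x) with sin θ(s) = F(x(s)) and 0 < x(s) ≤ a·2^{1/k} for all s, x(0) = a·2^{1/k}, and x(s) → 0 as s → +∞ and as s → −∞ (a homoclinic, convict-curve solution at level k). -/

import Mathlib

open Filter

/-- The polynomial function `F(y) = y^k/a^k − 1` generating the level-`k` convict curve. -/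
noncomputable def convictF (k : ℕ) (a : ℝ) : ℝ → ℝ := fun y => y ^ k / a ^ k - 1

/-- The right endpoint `a·2^{1/k}` of the strip `0 ≤ x ≤ a·2^{1/k}` where `|F| ≤ 1`. -/
noncomputable def convictEnd (k : ℕ) (a : ℝ) : ℝ := a * (2 : ℝ) ^ ((1 : ℝ) / (k : ℝ))

/-!
Along a solution the quantity `sin θ - F x` is conserved, so on the level `0` the abscissa is
determined by the angle: `x = a (1 + sin θ)^{1/k}`. The system thus reduces to the autonomous
equation `θ' = g θ` with `g θ = F'(x(θ)) = (k/a) (1 + sin θ)^{1 - 1/k}`, which is positive on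
`(-π/2, 3π/2)` and vanishes at both ends. Since `1 - 1/k ≥ 1/2`, `g` is bounded by a multiple of
the distance to either end, so `∫ dθ / g` diverges there: the inverse of this primitive is a
global solution with `θ(0) = π/2` that tends to `3π/2` and to `-π/2`, i.e. `x → 0` both ways.
-/

open Set Topology Real

section AutonomousODE

variable {g H : ℝ → ℝ} {α β : ℝ}

theorem exists_hasDerivAt_of_surjOn_primitive
    (hH : ∀ t ∈ Ioo α β, HasDerivAt H (g t)⁻¹ t) (hg : ∀ t ∈ Ioo α β, 0 < g t)
    (hsurj : SurjOn H (Ioo α β) univ) :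
    ∃ φ : ℝ → ℝ, (∀ s, φ s ∈ Ioo α β) ∧ (∀ t ∈ Ioo α β, φ (H t) = t) ∧
      (∀ s, HasDerivAt φ (g (φ s)) s) ∧ Tendsto φ atTop (𝓝 β) ∧ Tendsto φ atBot (𝓝 α) := by
  have hαβ : α < β := by
    obtain ⟨t, ht, -⟩ := hsurj (mem_univ 0)
    exact ht.1.trans ht.2
  have hH_mono : StrictMonoOn H (Ioo α β) :=
    strictMonoOn_of_hasDerivWithinAt_pos (convex_Ioo α β)
      (fun t ht => (hH t ht).continuousAt.continuousWithinAt)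
      (fun t ht => (hH t (interior_subset ht)).hasDerivWithinAt)
      (fun t ht => inv_pos.2 (hg t (interior_subset ht)))
  set φ := Function.invFunOn H (Ioo α β)
  have hφ_mem : ∀ s, φ s ∈ Ioo α β := fun s => (Function.invFunOn_pos (hsurj (mem_univ s))).1
  have hHφ : ∀ s, H (φ s) = s := fun s => (Function.invFunOn_pos (hsurj (mem_univ s))).2
  have hφH : ∀ t ∈ Ioo α β, φ (H t) = t := fun t ht => hH_mono.injOn (hφ_mem _) ht (hHφ _)
  have hφ_mono : StrictMono φ := fun s s' hss' =>
    (hH_mono.lt_iff_lt (hφ_mem s) (hφ_mem s')).1 (by rwa [hHφ, hHφ])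
  have hφ_range : range φ = Ioo α β :=
    (range_subset_iff.2 hφ_mem).antisymm fun t ht => ⟨H t, hφH t ht⟩
  have hφ_cont : Continuous φ := continuous_iff_continuousAt.2 fun s =>
    continuousAt_of_monotoneOn_of_image_mem_nhds (hφ_mono.monotone.monotoneOn univ) univ_mem
      (by rw [image_univ, hφ_range]; exact isOpen_Ioo.mem_nhds (hφ_mem s))
  refine ⟨φ, hφ_mem, hφH, fun s => ?_, ?_, ?_⟩
  · simpa using (hH (φ s) (hφ_mem s)).of_local_left_inverse hφ_cont.continuousAt
      (inv_pos.2 (hg _ (hφ_mem s))).ne' (Eventually.of_forall hHφ)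
  · exact tendsto_atTop_isLUB hφ_mono.monotone (hφ_range ▸ isLUB_Ioo hαβ)
  · exact tendsto_atBot_isGLB hφ_mono.monotone (hφ_range ▸ isGLB_Ioo hαβ)

theorem exists_primitive_lt_of_le_mul_sub_left {L : ℝ} (hαβ : α < β) (hL : 0 < L)
    (hH : ∀ t ∈ Ioo α β, HasDerivAt H (g t)⁻¹ t) (hg : ∀ t ∈ Ioo α β, 0 < g t)
    (hgL : ∀ t ∈ Ioo α β, g t ≤ L * (t - α)) (M : ℝ) : ∃ t ∈ Ioo α β, H t < M := by
  -- `H - log (· - α) / L` is monotone since `1/g ≥ 1/(L (t - α))`, and the logarithm tends to `-∞`.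
  set K : ℝ → ℝ := fun t => H t - L⁻¹ * log (t - α)
  have hK_deriv : ∀ t ∈ Ioo α β, HasDerivAt K ((g t)⁻¹ - L⁻¹ * (t - α)⁻¹) t := by
    intro t ht
    have hlog := ((hasDerivAt_id t).sub_const α).log (sub_ne_zero.2 ht.1.ne')
    have hK := (hH t ht).sub (hlog.const_mul L⁻¹)
    simp only [id, one_div] at hK
    exact hK
  have hK : MonotoneOn K (Ioo α β) := by
    refine monotoneOn_of_hasDerivWithinAt_nonneg (f' := fun t => (g t)⁻¹ - L⁻¹ * (t - α)⁻¹)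
      (convex_Ioo α β) ?_ ?_ ?_
    · exact fun t ht => (hK_deriv t ht).continuousAt.continuousWithinAt
    · rw [interior_Ioo]
      exact fun t ht => (hK_deriv t ht).hasDerivWithinAt
    · rw [interior_Ioo]
      intro t ht
      rw [sub_nonneg, ← mul_inv]
      exact inv_anti₀ (hg t ht) (hgL t ht)
  obtain ⟨t₀, ht₀⟩ : ∃ t₀, t₀ ∈ Ioo α β := nonempty_Ioo.2 hαβ
  set δ := min (t₀ - α) (exp (L * (M - K t₀ - 1)))
  have hδ : 0 < δ := lt_min (by linarith [ht₀.1]) (exp_pos _)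
  have hδt₀ : δ ≤ t₀ - α := min_le_left _ _
  have ht : α + δ ∈ Ioo α β := ⟨by linarith, by linarith [ht₀.2]⟩
  refine ⟨α + δ, ht, ?_⟩
  have hlog : log δ ≤ L * (M - K t₀ - 1) := (log_le_log hδ (min_le_right _ _)).trans_eq (log_exp _)
  have hKt := hK ht ht₀ (by linarith)
  simp only [K, add_sub_cancel_left] at hKt
  have hlog' : L⁻¹ * log δ ≤ M - K t₀ - 1 := by rwa [inv_mul_le_iff₀ hL]
  linarith

theorem exists_lt_primitive_of_le_mul_sub_right {L : ℝ} (hαβ : α < β) (hL : 0 < L)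
    (hH : ∀ t ∈ Ioo α β, HasDerivAt H (g t)⁻¹ t) (hg : ∀ t ∈ Ioo α β, 0 < g t)
    (hgL : ∀ t ∈ Ioo α β, g t ≤ L * (β - t)) (M : ℝ) : ∃ t ∈ Ioo α β, M < H t := by
  have hneg : ∀ {t}, t ∈ Ioo (-β) (-α) → -t ∈ Ioo α β := fun ht =>
    ⟨by linarith [ht.2], by linarith [ht.1]⟩
  obtain ⟨t, ht, hHt⟩ := exists_primitive_lt_of_le_mul_sub_left (H := fun t => -H (-t))
    (g := fun t => g (-t)) (neg_lt_neg hαβ) hL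
    (fun t ht => by
      have h := ((hH (-t) (hneg ht)).comp t (hasDerivAt_neg t)).neg
      rwa [mul_neg_one, neg_neg] at h)
    (fun t ht => hg (-t) (hneg ht))
    (fun t ht => (hgL (-t) (hneg ht)).trans_eq (by ring)) (-M)
  exact ⟨-t, hneg ht, by linarith⟩

theorem surjOn_primitive_of_le_mul_sub {L : ℝ} (hαβ : α < β) (hL : 0 < L)
    (hH : ∀ t ∈ Ioo α β, HasDerivAt H (g t)⁻¹ t) (hg : ∀ t ∈ Ioo α β, 0 < g t)
    (hgα : ∀ t ∈ Ioo α β, g t ≤ L * (t - α)) (hgβ : ∀ t ∈ Ioo α β, g t ≤ L * (β - t)) :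
    SurjOn H (Ioo α β) univ := by
  intro M _
  obtain ⟨t₁, ht₁, hM₁⟩ := exists_primitive_lt_of_le_mul_sub_left hαβ hL hH hg hgα M
  obtain ⟨t₂, ht₂, hM₂⟩ := exists_lt_primitive_of_le_mul_sub_right hαβ hL hH hg hgβ M
  have hsub : uIcc t₁ t₂ ⊆ Ioo α β := ordConnected_Ioo.uIcc_subset ht₁ ht₂
  obtain ⟨t, ht, hHt⟩ := intermediate_value_uIcc
    (fun t ht => (hH t (hsub ht)).continuousAt.continuousWithinAt)
    (Icc_subset_uIcc ⟨hM₁.le, hM₂.le⟩)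
  exact ⟨t, hsub ht, hHt⟩

theorem exists_hasDerivAt_of_le_mul_sub {L t₀ : ℝ} (ht₀ : t₀ ∈ Ioo α β) (hL : 0 < L)
    (hg_cont : ContinuousOn g (Ioo α β)) (hg : ∀ t ∈ Ioo α β, 0 < g t)
    (hgα : ∀ t ∈ Ioo α β, g t ≤ L * (t - α)) (hgβ : ∀ t ∈ Ioo α β, g t ≤ L * (β - t)) :
    ∃ φ : ℝ → ℝ, (∀ s, φ s ∈ Ioo α β) ∧ φ 0 = t₀ ∧ (∀ s, HasDerivAt φ (g (φ s)) s) ∧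
      Tendsto φ atTop (𝓝 β) ∧ Tendsto φ atBot (𝓝 α) := by
  have hinv_cont : ContinuousOn (fun t => (g t)⁻¹) (Ioo α β) :=
    hg_cont.inv₀ fun t ht => (hg t ht).ne'
  have hH : ∀ t ∈ Ioo α β, HasDerivAt (fun t => ∫ ψ in t₀..t, (g ψ)⁻¹) (g t)⁻¹ t := fun t ht =>
    intervalIntegral.integral_hasDerivAt_right
      (hinv_cont.mono (ordConnected_Ioo.uIcc_subset ht₀ ht)).intervalIntegrable
      ⟨Ioo α β, isOpen_Ioo.mem_nhds ht, hinv_cont.aestronglyMeasurable measurableSet_Ioo⟩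
      (hinv_cont.continuousAt (isOpen_Ioo.mem_nhds ht))
  obtain ⟨φ, hφ_mem, hφH, hφ_deriv, hφ_top, hφ_bot⟩ := exists_hasDerivAt_of_surjOn_primitive hH hg
    (surjOn_primitive_of_le_mul_sub (ht₀.1.trans ht₀.2) hL hH hg hgα hgβ)
  refine ⟨φ, hφ_mem, ?_, hφ_deriv, hφ_top, hφ_bot⟩
  simpa using hφH t₀ ht₀

end AutonomousODE

theorem hasDerivAt_cos_of_sin_eq_comp {F x θ : ℝ → ℝ} {F' s : ℝ} (hF : HasDerivAt F F' (x s))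
    (hF' : F' ≠ 0) (hx : DifferentiableAt ℝ x s) (hθ : HasDerivAt θ F' s)
    (hsin : ∀ r, sin (θ r) = F (x r)) : HasDerivAt x (cos (θ s)) s := by
  have h₁ : HasDerivAt (fun r => F (x r)) (F' * deriv x s) s := hF.comp s hx.hasDerivAt
  have h₂ : HasDerivAt (fun r => F (x r)) (cos (θ s) * F') s := by
    simpa only [hsin] using hθ.sin
  have : deriv x s = cos (θ s) := mul_left_cancel₀ hF' (h₁.unique h₂ |>.trans (mul_comm _ _))
  exact this ▸ hx.hasDerivAt

theorem one_add_sin_eq (θ : ℝ) : 1 + sin θ = 2 * sin (θ / 2 + π / 4) ^ 2 := by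
  rw [sin_sq_eq_half_sub, show 2 * (θ / 2 + π / 4) = θ + π / 2 by ring, cos_add_pi_div_two]
  ring

theorem one_add_sin_rpow_le {p : ℝ} (hp₀ : 1 / 2 ≤ p) (hp₁ : p ≤ 1) (θ : ℝ) :
    (1 + sin θ) ^ p ≤ 2 * |sin (θ / 2 + π / 4)| := by
  set σ := sin (θ / 2 + π / 4)
  have hσ : σ ^ 2 ≤ 1 := sin_sq_le_one _
  calc (1 + sin θ) ^ p = 2 ^ p * (σ ^ 2) ^ p := by
        rw [one_add_sin_eq, mul_rpow zero_le_two (sq_nonneg σ)]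
    _ ≤ 2 ^ (1 : ℝ) * (σ ^ 2) ^ (1 / 2 : ℝ) := by
        exact mul_le_mul (rpow_le_rpow_of_exponent_le one_le_two hp₁)
          (rpow_le_rpow_of_exponent_ge' (sq_nonneg σ) hσ (by norm_num) hp₀) (by positivity)
          (by positivity)
    _ = 2 * |σ| := by rw [rpow_one, ← sqrt_eq_rpow, sqrt_sq_eq_abs]

theorem one_add_sin_pos_of_mem_Ioo {θ : ℝ} (hθ : θ ∈ Ioo (-(π / 2)) (3 * π / 2)) :
    0 < 1 + sin θ := by
  have : 0 < sin (θ / 2 + π / 4) :=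
    sin_pos_of_pos_of_lt_pi (by linarith [hθ.1]) (by linarith [hθ.2])
  rw [one_add_sin_eq]
  positivity

theorem one_add_sin_rpow_le_of_mem_Ioo {p θ : ℝ} (hp₀ : 1 / 2 ≤ p) (hp₁ : p ≤ 1)
    (hθ : θ ∈ Ioo (-(π / 2)) (3 * π / 2)) :
    (1 + sin θ) ^ p ≤ θ - -(π / 2) ∧ (1 + sin θ) ^ p ≤ 3 * π / 2 - θ := by
  have hσ : 0 ≤ sin (θ / 2 + π / 4) :=
    sin_nonneg_of_nonneg_of_le_pi (by linarith [hθ.1]) (by linarith [hθ.2])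
  have hle := one_add_sin_rpow_le hp₀ hp₁ θ
  rw [abs_of_nonneg hσ] at hle
  constructor
  · linarith [sin_le (show 0 ≤ θ / 2 + π / 4 by linarith [hθ.1])]
  · rw [← sin_pi_sub (θ / 2 + π / 4)] at hle
    linarith [sin_le (show 0 ≤ π - (θ / 2 + π / 4) by linarith [hθ.2])]

section Convict

variable {k : ℕ} {a : ℝ}

noncomputable def convictAbscissa (k : ℕ) (a θ : ℝ) : ℝ := a * (1 + sin θ) ^ ((1 : ℝ) / k)

theorem hasDerivAt_convictF (k : ℕ) (a y : ℝ) :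
    HasDerivAt (convictF k a) (k * y ^ (k - 1) / a ^ k) y :=
  ((hasDerivAt_pow k y).div_const (a ^ k)).sub_const 1

theorem convictF_strictMonoOn (hk : k ≠ 0) (ha : 0 < a) : StrictMonoOn (convictF k a) (Ici 0) :=
  fun _ hx _ _ hxy => by
    unfold convictF
    gcongr

theorem convictF_convictAbscissa (hk : k ≠ 0) (ha : a ≠ 0) (θ : ℝ) :
    convictF k a (convictAbscissa k a θ) = sin θ := by
  rw [convictF, convictAbscissa, mul_pow, one_div,
    rpow_inv_natCast_pow (by linarith [neg_one_le_sin θ]) hk]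
  field_simp
  ring

theorem convictAbscissa_pi_div_two : convictAbscissa k a (π / 2) = convictEnd k a := by
  rw [convictAbscissa, convictEnd, sin_pi_div_two, one_add_one_eq_two]

theorem convictAbscissa_le (ha : 0 ≤ a) (θ : ℝ) : convictAbscissa k a θ ≤ convictEnd k a := by
  unfold convictAbscissa convictEnd
  gcongr
  · linarith [neg_one_le_sin θ]
  · linarith [sin_le_one θ]

theorem convictAbscissa_pos (ha : 0 < a) {θ : ℝ} (hθ : θ ∈ Ioo (-(π / 2)) (3 * π / 2)) :
    0 < convictAbscissa k a θ :=
  mul_pos ha (rpow_pos_of_pos (one_add_sin_pos_of_mem_Ioo hθ) _)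

theorem differentiableAt_convictAbscissa {θ : ℝ} (hθ : θ ∈ Ioo (-(π / 2)) (3 * π / 2)) :
    DifferentiableAt ℝ (convictAbscissa k a) θ :=
  ((differentiableAt_const _).add differentiableAt_sin).rpow_const
    (Or.inl (one_add_sin_pos_of_mem_Ioo hθ).ne') |>.const_mul a

theorem continuous_convictAbscissa : Continuous (convictAbscissa k a) :=
  continuous_const.mul <|
    (continuous_const.add continuous_sin).rpow_const fun _ => Or.inr (by positivity)

theorem convictAbscissa_of_sin_eq_neg_one (hk : k ≠ 0) {θ : ℝ} (hθ : sin θ = -1) :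
    convictAbscissa k a θ = 0 := by
  rw [convictAbscissa, hθ, add_neg_cancel, zero_rpow (by positivity), mul_zero]

theorem deriv_convictF_convictAbscissa (hk : k ≠ 0) (ha : 0 < a) (θ : ℝ) :
    deriv (convictF k a) (convictAbscissa k a θ) = k / a * (1 + sin θ) ^ (1 - 1 / (k : ℝ)) := by
  have hu : 0 ≤ 1 + sin θ := by linarith [neg_one_le_sin θ]
  have hk1 : ((k - 1 : ℕ) : ℝ) = k - 1 := by rw [Nat.cast_sub (by omega)]; norm_num
  rw [(hasDerivAt_convictF k a _).deriv, convictAbscissa, mul_pow,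
    ← rpow_natCast ((1 + sin θ) ^ _) (k - 1), ← rpow_mul hu, hk1, pow_sub₀ a ha.ne' (by omega)]
  field_simp

theorem deriv_convictF_pos (hk : k ≠ 0) (ha : 0 < a) {y : ℝ} (hy : 0 < y) :
    0 < deriv (convictF k a) y := by
  rw [(hasDerivAt_convictF k a y).deriv]
  have : (0 : ℝ) < k := by exact_mod_cast Nat.pos_of_ne_zero hk
  positivity

theorem exists_convict_angle (hk : 2 ≤ k) (ha : 0 < a) :
    ∃ θ : ℝ → ℝ, (∀ s, θ s ∈ Ioo (-(π / 2)) (3 * π / 2)) ∧ θ 0 = π / 2 ∧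
      (∀ s, HasDerivAt θ (deriv (convictF k a) (convictAbscissa k a (θ s))) s) ∧
      Tendsto θ atTop (𝓝 (3 * π / 2)) ∧ Tendsto θ atBot (𝓝 (-(π / 2))) := by
  have hk0 : k ≠ 0 := by omega
  have hkR : (2 : ℝ) ≤ k := by exact_mod_cast hk
  have hp₀ : 1 / 2 ≤ 1 - 1 / (k : ℝ) := by
    linarith [one_div_le_one_div_of_le two_pos hkR]
  have hp₁ : 1 - 1 / (k : ℝ) ≤ 1 := sub_le_self _ (by positivity)
  have hL : 0 < (k : ℝ) / a := by positivity
  simp_rw [deriv_convictF_convictAbscissa hk0 ha]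
  refine exists_hasDerivAt_of_le_mul_sub (g := fun θ => k / a * (1 + sin θ) ^ (1 - 1 / (k : ℝ)))
    (α := -(π / 2)) (β := 3 * π / 2) (t₀ := π / 2) ⟨by linarith [pi_pos], by linarith [pi_pos]⟩
    hL ?_    (fun θ hθ => ?_) (fun θ hθ => ?_) (fun θ hθ => ?_)
  · exact (continuous_const.mul ((continuous_const.add continuous_sin).rpow_const
      fun _ => Or.inr (by linarith))).continuousOn
  · rw [← deriv_convictF_convictAbscissa hk0 ha]
    exact deriv_convictF_pos hk0 ha (convictAbscissa_pos ha hθ)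
  · exact mul_le_mul_of_nonneg_left (one_add_sin_rpow_le_of_mem_Ioo hp₀ hp₁ hθ).1 hL.le
  · exact mul_le_mul_of_nonneg_left (one_add_sin_rpow_le_of_mem_Ioo hp₀ hp₁ hθ).2 hL.le

end Convict

/-- for `k ≥ 2`, `a > 0` and `F(y) = y^k/a^k − 1` one has `F(0) = −1`,
`F'(0) = 0`, `F(a·2^{1/k}) = 1`, `F'(a·2^{1/k}) ≠ 0`, `|F| < 1` on `(0, a·2^{1/k})`, and
there is a global solution of `x' = cos θ`, `θ' = F'(x)` with `sin θ = F(x)`,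
`0 < x ≤ a·2^{1/k}`, `x(0) = a·2^{1/k}`, and `x(s) → 0` as `s → ±∞`: a homoclinic
(convict-curve) solution at level `k`. -/
theorem stmt_16 (k : ℕ) (hk : 2 ≤ k) (a : ℝ) (ha : 0 < a) :
    convictF k a 0 = -1 ∧
    deriv (convictF k a) 0 = 0 ∧
    convictF k a (convictEnd k a) = 1 ∧
    deriv (convictF k a) (convictEnd k a) ≠ 0 ∧
    (∀ y ∈ Set.Ioo 0 (convictEnd k a), |convictF k a y| < 1) ∧
    ∃ x θ : ℝ → ℝ,
      (∀ s : ℝ, HasDerivAt x (Real.cos (θ s)) s ∧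
        HasDerivAt θ (deriv (convictF k a) (x s)) s ∧
        Real.sin (θ s) = convictF k a (x s) ∧
        0 < x s ∧ x s ≤ convictEnd k a) ∧
      x 0 = convictEnd k a ∧
      Tendsto x atTop (nhds 0) ∧ Tendsto x atBot (nhds 0) := by
  have hk0 : k ≠ 0 := by omega
  have hEnd : convictF k a (convictEnd k a) = 1 := by
    rw [← convictAbscissa_pi_div_two, convictF_convictAbscissa hk0 ha.ne', sin_pi_div_two]
  have hEnd_pos : 0 < convictEnd k a := by unfold convictEnd; positivity
  have hF0 : convictF k a 0 = -1 := by simp [convictF, zero_pow hk0]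
  obtain ⟨θ, hθ_mem, hθ0, hθ_deriv, hθ_top, hθ_bot⟩ := exists_convict_angle hk ha
  have hx_lim : ∀ {l : Filter ℝ} {θ₀ : ℝ}, sin θ₀ = -1 → Tendsto θ l (𝓝 θ₀) →
      Tendsto (fun s => convictAbscissa k a (θ s)) l (𝓝 0) := fun hθ₀ hθ =>
    convictAbscissa_of_sin_eq_neg_one (a := a) hk0 hθ₀ ▸
      (continuous_convictAbscissa.tendsto _).comp hθ
  refine ⟨hF0, ?_, hEnd, (deriv_convictF_pos hk0 ha hEnd_pos).ne', fun y hy => ?_,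
    fun s => convictAbscissa k a (θ s), θ, fun s => ⟨?_, hθ_deriv s,
      (convictF_convictAbscissa hk0 ha.ne' _).symm, convictAbscissa_pos ha (hθ_mem s),
      convictAbscissa_le ha.le _⟩, by simp only [hθ0, convictAbscissa_pi_div_two],
    hx_lim ?_ hθ_top, hx_lim (by rw [sin_neg, sin_pi_div_two]) hθ_bot⟩
  · rw [(hasDerivAt_convictF k a 0).deriv, zero_pow (by omega)]
    simp
  · have hmono := convictF_strictMonoOn hk0 ha
    rw [abs_lt]
    exact ⟨hF0 ▸ hmono self_mem_Ici hy.1.le hy.1, hEnd ▸ hmono hy.1.le hEnd_pos.le hy.2⟩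
  · exact hasDerivAt_cos_of_sin_eq_comp (hasDerivAt_convictF k a _).differentiableAt.hasDerivAt
      (deriv_convictF_pos hk0 ha (convictAbscissa_pos ha (hθ_mem s))).ne'
      ((differentiableAt_convictAbscissa (hθ_mem s)).comp s (hθ_deriv s).differentiableAt)
      (hθ_deriv s) (fun r => (convictF_convictAbscissa hk0 ha.ne' _).symm)
  · rw [show 3 * π / 2 = π / 2 + π by ring, sin_add_pi, sin_pi_div_two]
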